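/- arXiv:2211.02139 — 9 statements merged into one kernel-verified Lean document; each statement's English description precedes it below -/
import Mathlib

section
/- Let A be a protected-attribute vector of size n with N1 ≥ 1 and N0 ≥ 1. Let h1 and h2 be two binary classifiers that agree on every index except a fixed index j0, where h1_{j0} = 0 and h2_{j0} = 1. Then SP(A,h2) − SP(A,h1) = 1/N1 if a_{j0} = 1, and SP(A,h2) − SP(A,h1) = −1/N0 if a_{j0} = 0. In particular, the sign of the difference of the two statistical parity gaps reveals the protected attribute of individual j0. -/
open Finset

/-- Size of the advantaged group (`a_j = 1`). -/
def nAdv {n : ℕ} (A : Fin n → Bool) : ℕ :=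
  (Finset.univ.filter (fun j => A j = true)).card

/-- Size of the disadvantaged group (`a_j = 0`). -/
def nDis {n : ℕ} (A : Fin n → Bool) : ℕ :=
  (Finset.univ.filter (fun j => A j = false)).card

/-- Statistical parity gap of classifier `h` on dataset with protected attributes `A`. -/
noncomputable def spGap {n : ℕ} (A : Fin n → Bool) (h : Fin n → ℝ) : ℝ :=
  (∑ j ∈ Finset.univ.filter (fun j => A j = true), h j) / (nAdv A : ℝ) -
  (∑ j ∈ Finset.univ.filter (fun j => A j = false), h j) / (nDis A : ℝ)

lemma sum_diff_single {n : ℕ} (s : Finset (Fin n)) (j0 : Fin n)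
    (h1 h2 : Fin n → ℝ) (hagree : ∀ j, j ≠ j0 → h1 j = h2 j)
    (h10 : h1 j0 = 0) (h21 : h2 j0 = 1) :
    (∑ j ∈ s, h2 j) - (∑ j ∈ s, h1 j) = if j0 ∈ s then 1 else 0 := by
  rw [← Finset.sum_sub_distrib]
  by_cases hm : j0 ∈ s
  · rw [if_pos hm, ← Finset.add_sum_erase s _ hm,
      Finset.sum_eq_zero (fun j hj => by
        rw [hagree j (Finset.ne_of_mem_erase hj)]; ring)]
    rw [h10, h21]; ring
  · rw [if_neg hm]
    exact Finset.sum_eq_zero fun j hj => by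
      rw [hagree j (by rintro rfl; exact hm hj)]; ring

/-- two binary classifiers differing only at index `j0`
(where `h1 j0 = 0`, `h2 j0 = 1`) have statistical-parity-gap difference
`1/N1` if `a_{j0} = 1` and `-1/N0` if `a_{j0} = 0`. -/
theorem double_query_reveals_attribute {n : ℕ} (A : Fin n → Bool) (j0 : Fin n)
    (hN1 : 1 ≤ nAdv A) (hN0 : 1 ≤ nDis A)
    (h1 h2 : Fin n → ℝ)
    (hb1 : ∀ j, h1 j = 0 ∨ h1 j = 1) (hb2 : ∀ j, h2 j = 0 ∨ h2 j = 1)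
    (hagree : ∀ j, j ≠ j0 → h1 j = h2 j)
    (h10 : h1 j0 = 0) (h21 : h2 j0 = 1) :
    (A j0 = true → spGap A h2 - spGap A h1 = 1 / (nAdv A : ℝ)) ∧
    (A j0 = false → spGap A h2 - spGap A h1 = -(1 / (nDis A : ℝ))) := by
  have hT := sum_diff_single (Finset.univ.filter (fun j => A j = true)) j0 h1 h2 hagree h10 h21
  have hF := sum_diff_single (Finset.univ.filter (fun j => A j = false)) j0 h1 h2 hagree h10 h21
  have hN1' : (nAdv A : ℝ) ≠ 0 := by positivity
  have hN0' : (nDis A : ℝ) ≠ 0 := by positivity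
  constructor <;> intro hA <;> simp only [hA, Finset.mem_filter, Finset.mem_univ, true_and,
    if_true, if_false, Bool.true_eq_false, Bool.false_eq_true] at hT hF <;>
  · simp only [spGap]
    have eT : (∑ j ∈ Finset.univ.filter (fun j => A j = true), h2 j)
        = (∑ j ∈ Finset.univ.filter (fun j => A j = true), h1 j) + (if A j0 = true then 1 else 0) := by
      simp_all; linarith
    have eF : (∑ j ∈ Finset.univ.filter (fun j => A j = false), h2 j)
        = (∑ j ∈ Finset.univ.filter (fun j => A j = false), h1 j) + (if A j0 = false then 1 else 0) := by
      simp_all; linarith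
    rw [eT, eF]
    simp [hA]
    ring
end

section
/- (Compressed-sensing reduction) Let A be a protected-attribute vector of size n with N1 ≥ 1 and N0 ≥ 1, and define v ∈ ℝ^n by v_j = 1/N1 if a_j = 1 and v_j = −1/N0 if a_j = 0. Define r ∈ ℝ^n by r_j = 1/N1 for all j, and s ∈ ℝ^n by s_j = 0 if a_j = 1 and s_j = 1/N1 + 1/N0 if a_j = 0. Then: (i) v = r − s; (ii) s has exactly N0 nonzero entries (i.e. s is N0-sparse, with support equal to the disadvantaged group); and (iii) for every m × n real matrix H of predictions, H·r − H·v = H·s, i.e. subtracting the vector of statistical parity gaps H·v from the known vector H·r yields a measurement vector of the sparse unknown s under the sensing matrix H. -/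
open Finset

/-- Compressed-sensing reduction: with `v j = 1/N1` if `a_j = 1` and
`-1/N0` otherwise, `r j = 1/N1`, and `s j = 0` if `a_j = 1` and `1/N1 + 1/N0` otherwise,
we have (i) `v = r - s`; (ii) `s` is `N0`-sparse with support the disadvantaged group;
(iii) for every prediction matrix `H`, `H·r - H·v = H·s`. -/
theorem compressed_sensing_reduction {n : ℕ} (A : Fin n → Bool)
    (hN1 : 1 ≤ nAdv A) (hN0 : 1 ≤ nDis A)
    (v r s : Fin n → ℝ)
    (hv : ∀ j, v j = if A j = true then 1 / (nAdv A : ℝ) else -(1 / (nDis A : ℝ)))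
    (hr : ∀ j, r j = 1 / (nAdv A : ℝ))
    (hs : ∀ j, s j = if A j = true then 0 else 1 / (nAdv A : ℝ) + 1 / (nDis A : ℝ)) :
    v = r - s ∧
    {j | s j ≠ 0} = {j | A j = false} ∧
    (Finset.univ.filter (fun j => s j ≠ 0)).card = nDis A ∧
    (∀ (m : ℕ) (H : Matrix (Fin m) (Fin n) ℝ), (∀ i j, H i j ∈ Set.Icc (0 : ℝ) 1) →
      H.mulVec r - H.mulVec v = H.mulVec s) := by
  have h1 : (0:ℝ) < (nAdv A : ℝ) := by exact_mod_cast hN1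
  have h0 : (0:ℝ) < (nDis A : ℝ) := by exact_mod_cast hN0
  have hvrs : v = r - s := by
    funext j
    simp only [Pi.sub_apply, hv j, hr j, hs j]
    cases hA : A j <;> simp
  have hsupp : ∀ j, s j ≠ 0 ↔ A j = false := by
    intro j
    rw [hs j]
    cases hA : A j <;> simp
    positivity
  refine ⟨hvrs, ?_, ?_, ?_⟩
  · ext j; exact hsupp j
  · unfold nDis; congr 1; ext j; simp [hsupp j]
  · intro m H _
    rw [hvrs]
    funext i
    simp [Matrix.mulVec, dotProduct, mul_sub, Finset.sum_sub_distrib]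
end

section
/- (Partition from absolute statistical parity, unequal group sizes) Let A be a protected-attribute vector of size n with N1 ≥ 1, N0 ≥ 1 and N1 ≠ N0. For each index j, let h^{(j)} be the classifier accepting only individual j (h^{(j)}_j = 1 and 0 elsewhere), and let SP_j = SP(A, h^{(j)}). Then for all indices i and j: a_i = a_j if and only if |SP_i| = |SP_j|. Hence the n absolute-statistical-parity queries |SP_1|,…,|SP_n| partition the individuals into the two protected-attribute groups. -/
open Finset

lemma sum_indicator {n : ℕ} (s : Finset (Fin n)) (i : Fin n) :
    (∑ j ∈ s, (if j = i then (1:ℝ) else 0)) = if i ∈ s then 1 else 0 := by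
  simp [Finset.sum_ite_eq']

lemma spGap_indicator {n : ℕ} (A : Fin n → Bool) (i : Fin n)
    (h : Fin n → Fin n → ℝ) (hh : ∀ j k, h j k = if k = j then 1 else 0) :
    spGap A (h i) = if A i = true then 1 / (nAdv A : ℝ) else -(1 / (nDis A : ℝ)) := by
  unfold spGap
  have h1 : (∑ j ∈ Finset.univ.filter (fun j => A j = true), h i j)
      = if A i = true then (1:ℝ) else 0 := by
    simp only [hh]
    rw [sum_indicator]
    simp
  have h2 : (∑ j ∈ Finset.univ.filter (fun j => A j = false), h i j)
      = if A i = false then (1:ℝ) else 0 := by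
    simp only [hh]
    rw [sum_indicator]
    simp
  rw [h1, h2]
  cases hA : A i <;> simp

/-- Partition from absolute statistical parity, unequal group sizes:
if `N1 ≠ N0`, then with `h^{(j)}` the classifier accepting only individual `j`,
`a_i = a_j` iff `|SP_i| = |SP_j|`. -/
theorem abs_sp_partition_unequal {n : ℕ} (A : Fin n → Bool)
    (hN1 : 1 ≤ nAdv A) (hN0 : 1 ≤ nDis A) (hne : nAdv A ≠ nDis A)
    (h : Fin n → Fin n → ℝ)
    (hh : ∀ j k, h j k = if k = j then 1 else 0) :
    ∀ i j, A i = A j ↔ |spGap A (h i)| = |spGap A (h j)| := by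
  intro i j
  have e1 := spGap_indicator A i h hh
  have e2 := spGap_indicator A j h hh
  have p1 : (0:ℝ) < (nAdv A : ℝ) := by exact_mod_cast hN1
  have p0 : (0:ℝ) < (nDis A : ℝ) := by exact_mod_cast hN0
  rw [e1, e2]
  cases hAi : A i <;> cases hAj : A j <;>
    simp [abs_of_pos, abs_of_nonneg,
      one_div_nonneg.mpr (le_of_lt p1), one_div_nonneg.mpr (le_of_lt p0), abs_neg]
  · exact fun hc => hne hc.symm
  · exact hne
end

section
/- (Partition from absolute statistical parity, equal group sizes) Let A be a protected-attribute vector of size n ≥ 2 with N1 = N0 ≥ 1. Fix an index j0, and for each j ≠ j0 let h^{(j)} be the binary classifier accepting exactly the individuals j0 and j (value 1 on these two indices and 0 elsewhere). Then |SP(A, h^{(j)})| = 2/N1 if a_j = a_{j0}, and |SP(A, h^{(j)})| = 0 if a_j ≠ a_{j0}. Hence a_j = a_{j0} if and only if |SP(A, h^{(j)})| ≠ 0, so these n − 1 absolute-statistical-parity queries partition the individuals into the two protected-attribute groups. -/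
open Finset

lemma sum_pair_filter {n : ℕ} (p : Fin n → Prop) [DecidablePred p] (j0 j : Fin n) (hne : j ≠ j0) :
    ∑ k ∈ univ.filter p, (if k = j0 ∨ k = j then (1:ℝ) else 0)
      = (if p j0 then 1 else 0) + (if p j then 1 else 0) := by
  have h1 : ∀ k : Fin n, (k = j0 ∨ k = j) ↔ k ∈ ({j0, j} : Finset (Fin n)) := by
    intro k; simp
  simp only [h1, Finset.sum_ite_mem]
  have h2 : Finset.filter p univ ∩ ({j0, j} : Finset (Fin n)) = ({j0, j} : Finset (Fin n)).filter p := by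
    ext k; simp [and_comm]
  rw [h2, Finset.sum_filter, Finset.sum_pair (Ne.symm hne)]

/-- Partition from absolute statistical parity, equal group sizes:
with `N1 = N0 ≥ 1` and `h^{(j)}` the binary classifier accepting exactly `j0` and `j`,
we have `|SP(A,h^{(j)})| = 2/N1` if `a_j = a_{j0}` and `= 0` otherwise; hence
`a_j = a_{j0}` iff `|SP(A,h^{(j)})| ≠ 0`. -/
theorem abs_sp_partition_equal {n : ℕ} (A : Fin n → Bool) (hn : 2 ≤ n)
    (hN1 : 1 ≤ nAdv A) (heq : nAdv A = nDis A)
    (j0 : Fin n) (h : Fin n → Fin n → ℝ)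
    (hh : ∀ j k, h j k = if k = j0 ∨ k = j then 1 else 0) :
    ∀ j, j ≠ j0 →
      (A j = A j0 → |spGap A (h j)| = 2 / (nAdv A : ℝ)) ∧
      (A j ≠ A j0 → |spGap A (h j)| = 0) ∧
      (A j = A j0 ↔ |spGap A (h j)| ≠ 0) := by
  intro j hj
  have hNpos : (0:ℝ) < (nAdv A : ℝ) := by exact_mod_cast hN1
  have hst : ∑ k ∈ Finset.univ.filter (fun k => A k = true), h j k
      = (if A j0 = true then (1:ℝ) else 0) + (if A j = true then 1 else 0) := by
    simp only [hh]; exact sum_pair_filter _ _ _ hj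
  have hsf : ∑ k ∈ Finset.univ.filter (fun k => A k = false), h j k
      = (if A j0 = false then (1:ℝ) else 0) + (if A j = false then 1 else 0) := by
    simp only [hh]; exact sum_pair_filter _ _ _ hj
  have hgap : spGap A (h j)
      = (((if A j0 = true then (1:ℝ) else 0) + (if A j = true then 1 else 0))
        - ((if A j0 = false then (1:ℝ) else 0) + (if A j = false then 1 else 0))) / (nAdv A : ℝ) := by
    rw [spGap, hst, hsf, ← heq, sub_div]
  have h2N : (2:ℝ) / (nAdv A : ℝ) ≠ 0 := by positivity
  have e1 : |(1:ℝ) + 1| = 2 := by norm_num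
  have e2 : |(-1:ℝ) + -1| = 2 := by norm_num
  cases hj0 : A j0 <;> cases hjv : A j <;>
    simp [hgap, hj0, hjv, abs_div, abs_of_pos hNpos, h2N, e1, e2]
end

section
/- (Global sensitivity of the statistical parity query, Theorem 4) Let A and A′ be two protected-attribute vectors of size n that differ at exactly one index (neighboring datasets), and suppose each of A and A′ has at least one individual in each group. Then for any m classifiers h_1,…,h_m with predictions in [0,1], the ℓ1-distance between the corresponding vectors of statistical parity gaps satisfies Σ_{i=1}^m |SP(A, h_i) − SP(A′, h_i)| ≤ m·(1/2 + 1/(n−1)). -/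
open Finset

lemma key_real (a b T s x : ℝ) (ha : 2 ≤ a) (hb : 1 ≤ b)
    (hT : 0 ≤ T) (hT' : T ≤ a - 1) (hs : 0 ≤ s) (hs' : s ≤ b)
    (hx : 0 ≤ x) (hx' : x ≤ 1) :
    |((T + x) / a - s / b) - (T / (a - 1) - (s + x) / (b + 1))| ≤ 1 / 2 + 1 / (a + b - 1) := by
  have ha0 : (0:ℝ) < a := by linarith
  have ha1 : (0:ℝ) < a - 1 := by linarith
  have hb0 : (0:ℝ) < b := by linarith
  have hb1 : (0:ℝ) < b + 1 := by linarith
  have hab : (0:ℝ) < a + b - 1 := by linarith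
  have e : ((T + x) / a - s / b) - (T / (a - 1) - (s + x) / (b + 1))
      = (x / a - T / (a * (a - 1))) + (x / (b + 1) - s / (b * (b + 1))) := by
    field_simp
    ring
  rw [e]
  have hTa : T / (a * (a - 1)) ≤ 1 / a := by
    rw [div_le_div_iff₀ (by positivity) ha0]; nlinarith
  have hTa0 : 0 ≤ T / (a * (a - 1)) := by positivity
  have hxa : x / a ≤ 1 / a := by gcongr
  have hxa0 : 0 ≤ x / a := by positivity
  have hsb : s / (b * (b + 1)) ≤ 1 / (b + 1) := by
    rw [div_le_div_iff₀ (by positivity) hb1]; nlinarith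
  have hsb0 : 0 ≤ s / (b * (b + 1)) := by positivity
  have hxb : x / (b + 1) ≤ 1 / (b + 1) := by gcongr
  have hxb0 : 0 ≤ x / (b + 1) := by positivity
  have h1 : |x / a - T / (a * (a - 1))| ≤ 1 / a := by
    rw [abs_le]; constructor <;> linarith
  have h2 : |x / (b + 1) - s / (b * (b + 1))| ≤ 1 / (b + 1) := by
    rw [abs_le]; constructor <;> linarith
  have h3 : 1 / a + 1 / (b + 1) ≤ 1 / 2 + 1 / (a + b - 1) := by
    rw [div_add_div _ _ (ne_of_gt ha0) (ne_of_gt hb1),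
        div_add_div _ _ (by norm_num) (ne_of_gt hab),
        div_le_div_iff₀ (by positivity) (by positivity)]
    nlinarith [mul_nonneg (mul_nonneg (by linarith : (0:ℝ) ≤ a - 2) (by linarith : (0:ℝ) ≤ b - 1)) (by linarith : (0:ℝ) ≤ a + b + 1)]
  calc |(x / a - T / (a * (a - 1))) + (x / (b + 1) - s / (b * (b + 1)))|
      ≤ |x / a - T / (a * (a - 1))| + |x / (b + 1) - s / (b * (b + 1))| := abs_add_le _ _
    _ ≤ 1 / a + 1 / (b + 1) := by linarith
    _ ≤ 1 / 2 + 1 / (a + b - 1) := h3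

lemma sp_oriented {n : ℕ} (A A' : Fin n → Bool) (k : Fin n)
    (hk1 : A k = true) (hk0 : A' k = false)
    (hsame : ∀ j, j ≠ k → A j = A' j)
    (hN0 : 1 ≤ nDis A) (hN1' : 1 ≤ nAdv A')
    (h0 : Fin n → ℝ) (hh : ∀ j, h0 j ∈ Set.Icc (0:ℝ) 1) :
    |spGap A h0 - spGap A' h0| ≤ 1 / 2 + 1 / ((n : ℝ) - 1) := by
  set s1 := Finset.univ.filter (fun j => A j = true) with hs1
  set s0 := Finset.univ.filter (fun j => A j = false) with hs0
  have hks1 : k ∈ s1 := by simp [hs1, hk1]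
  have hks0 : k ∉ s0 := by simp [hs0, hk1]
  have e1 : Finset.univ.filter (fun j => A' j = true) = s1.erase k := by
    ext j
    by_cases hj : j = k
    · subst hj; simp [hk0]
    · simp [hs1, hj, ← hsame j hj]
  have e0 : Finset.univ.filter (fun j => A' j = false) = insert k s0 := by
    ext j
    by_cases hj : j = k
    · subst hj; simp [hk0]
    · simp [hs0, hj, ← hsame j hj]
  have hcA' : nAdv A' = s1.card - 1 := by
    rw [nAdv, e1, Finset.card_erase_of_mem hks1]
  have hcD' : nDis A' = s0.card + 1 := by
    rw [nDis, e0, Finset.card_insert_of_notMem hks0]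
  have hs1card : 2 ≤ s1.card := by
    have := hN1'
    rw [hcA'] at this
    omega
  have hsum : s1.card + s0.card = n := by
    have := Finset.card_filter_add_card_filter_not (s := (Finset.univ : Finset (Fin n)))
      (p := fun j => A j = true)
    simpa [hs1, hs0, Bool.not_eq_true] using this
  have hsumerase : ∑ j ∈ s1.erase k, h0 j = (∑ j ∈ s1, h0 j) - h0 k :=
    Finset.sum_erase_eq_sub hks1
  have hsuminsert : ∑ j ∈ insert k s0, h0 j = h0 k + ∑ j ∈ s0, h0 j :=
    Finset.sum_insert hks0
  have hb1 : ∑ j ∈ s1, h0 j ≤ s1.card := by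
    calc ∑ j ∈ s1, h0 j ≤ ∑ _j ∈ s1, (1:ℝ) := Finset.sum_le_sum (fun j _ => (hh j).2)
      _ = s1.card := by simp
  have hb1' : (∑ j ∈ s1, h0 j) - h0 k ≥ 0 := by
    have := Finset.single_le_sum (f := h0) (fun j _ => (hh j).1) hks1
    linarith
  have hb0 : ∑ j ∈ s0, h0 j ≤ s0.card := by
    calc ∑ j ∈ s0, h0 j ≤ ∑ _j ∈ s0, (1:ℝ) := Finset.sum_le_sum (fun j _ => (hh j).2)
      _ = s0.card := by simp
  have hb0' : 0 ≤ ∑ j ∈ s0, h0 j := Finset.sum_nonneg (fun j _ => (hh j).1)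
  have hb1e : (∑ j ∈ s1, h0 j) - h0 k ≤ (s1.card : ℝ) - 1 := by
    rw [← hsumerase]
    calc ∑ j ∈ s1.erase k, h0 j ≤ ∑ _j ∈ s1.erase k, (1:ℝ) :=
          Finset.sum_le_sum (fun j _ => (hh j).2)
      _ = ((s1.erase k).card : ℝ) := by simp
      _ = (s1.card : ℝ) - 1 := by
          rw [Finset.card_erase_of_mem hks1]
          push_cast [Nat.cast_sub (by omega : 1 ≤ s1.card)]
          ring
  have key := key_real (s1.card : ℝ) (s0.card : ℝ) ((∑ j ∈ s1, h0 j) - h0 k)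
      (∑ j ∈ s0, h0 j) (h0 k)
      (by exact_mod_cast hs1card) (by exact_mod_cast hN0)
      hb1' hb1e hb0' hb0 (hh k).1 (hh k).2
  have hn : ((s1.card : ℝ) + (s0.card : ℝ)) - 1 = (n : ℝ) - 1 := by
    push_cast [← hsum]; ring
  rw [show ((s1.card:ℝ) + (s0.card:ℝ) - 1) = ((n:ℝ) - 1) from hn] at key
  have hgap : spGap A h0 - spGap A' h0
      = (((∑ j ∈ s1, h0 j) - h0 k + h0 k) / (s1.card : ℝ)
          - (∑ j ∈ s0, h0 j) / (s0.card : ℝ))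
        - (((∑ j ∈ s1, h0 j) - h0 k) / ((s1.card : ℝ) - 1)
          - ((∑ j ∈ s0, h0 j) + h0 k) / ((s0.card : ℝ) + 1)) := by
    rw [spGap, spGap, e1, e0, hsumerase, hsuminsert, hcA', hcD']
    have : ((s1.card - 1 : ℕ) : ℝ) = (s1.card : ℝ) - 1 := by
      push_cast [Nat.cast_sub (by omega : 1 ≤ s1.card)]; ring
    rw [this]
    push_cast
    ring_nf
    rw [nAdv, nDis, ← hs1, ← hs0]
    ring
  rw [hgap]
  exact key

lemma sp_single {n : ℕ} (A A' : Fin n → Bool)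
    (hdiff : (Finset.univ.filter (fun j => A j ≠ A' j)).card = 1)
    (hN1 : 1 ≤ nAdv A) (hN0 : 1 ≤ nDis A)
    (hN1' : 1 ≤ nAdv A') (hN0' : 1 ≤ nDis A')
    (h0 : Fin n → ℝ) (hh : ∀ j, h0 j ∈ Set.Icc (0:ℝ) 1) :
    |spGap A h0 - spGap A' h0| ≤ 1 / 2 + 1 / ((n : ℝ) - 1) := by
  obtain ⟨k, hk⟩ := Finset.card_eq_one.mp hdiff
  have hkne : A k ≠ A' k := by
    have : k ∈ Finset.univ.filter (fun j => A j ≠ A' j) := by rw [hk]; simp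
    simpa using this
  have hsame : ∀ j, j ≠ k → A j = A' j := by
    intro j hj
    by_contra hc
    have : j ∈ Finset.univ.filter (fun j => A j ≠ A' j) := by simp [hc]
    rw [hk] at this
    exact hj (Finset.mem_singleton.mp this)
  cases hAk : A k with
  | true =>
    have hA'k : A' k = false := by
      cases h' : A' k
      · rfl
      · exact absurd (hAk.trans h'.symm) hkne
    exact sp_oriented A A' k hAk hA'k hsame hN0 hN1' h0 hh
  | false =>
    have hA'k : A' k = true := by
      cases h' : A' k
      · exact absurd (hAk.trans h'.symm) hkne
      · rfl
    rw [abs_sub_comm]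
    exact sp_oriented A' A k hA'k hAk (fun j hj => (hsame j hj).symm) hN0' hN1 h0 hh

/-- Global sensitivity of the statistical parity query: for neighboring
attribute vectors `A`, `A'` (differing at exactly one index, each with at least one
individual in each group), and any `m` classifiers with predictions in `[0,1]`,
the ℓ1-distance of the vectors of statistical parity gaps is at most
`m·(1/2 + 1/(n-1))`. -/
theorem sp_global_sensitivity {n m : ℕ} (A A' : Fin n → Bool)
    (hdiff : (Finset.univ.filter (fun j => A j ≠ A' j)).card = 1)
    (hN1 : 1 ≤ nAdv A) (hN0 : 1 ≤ nDis A)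
    (hN1' : 1 ≤ nAdv A') (hN0' : 1 ≤ nDis A')
    (h : Fin m → Fin n → ℝ) (hh : ∀ i j, h i j ∈ Set.Icc (0 : ℝ) 1) :
    ∑ i, |spGap A (h i) - spGap A' (h i)| ≤ (m : ℝ) * (1 / 2 + 1 / ((n : ℝ) - 1)) := by
  calc ∑ i, |spGap A (h i) - spGap A' (h i)|
      ≤ ∑ _i : Fin m, (1 / 2 + 1 / ((n : ℝ) - 1)) :=
        Finset.sum_le_sum (fun i _ =>
          sp_single A A' hdiff hN1 hN0 hN1' hN0' (h i) (hh i))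
    _ = (m : ℝ) * (1 / 2 + 1 / ((n : ℝ) - 1)) := by
        simp [Finset.sum_const, Finset.card_univ, nsmul_eq_mul]; ring
end

section
/- (Single-flip sensitivity bound) Let A be a protected-attribute vector of size n with group sizes N1 = |{j : a_j = 1}| ≥ 1 and N0 = |{j : a_j = 0}| ≥ 2, and let A′ be obtained from A by changing the attribute of one individual j0 from a_{j0} = 0 to a′_{j0} = 1 (leaving all other entries unchanged). Then for every classifier h with predictions in [0,1], |SP(A, h) − SP(A′, h)| ≤ 1/(N1 + 1) + 1/N0. -/
open Finset

lemma sp_aux (N1 N0 S1 S0 x : ℝ) (hN1 : 1 ≤ N1) (hN0 : 2 ≤ N0)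
    (hx0 : 0 ≤ x) (hx1 : x ≤ 1) (hS1a : 0 ≤ S1) (hS1b : S1 ≤ N1)
    (hS0a : x ≤ S0) (hS0b : S0 - x ≤ N0 - 1) :
    |S1/N1 - S0/N0 - ((S1+x)/(N1+1) - (S0-x)/(N0-1))| ≤ 1/(N1+1) + 1/N0 := by
  have p1 : (0:ℝ) < N1 := by linarith
  have p2 : (0:ℝ) < N1 + 1 := by linarith
  have p3 : (0:ℝ) < N0 := by linarith
  have p4 : (0:ℝ) < N0 - 1 := by linarith
  have h1 : S1/N1 - (S1+x)/(N1+1) = (S1 - N1*x)/(N1*(N1+1)) := by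
    field_simp; ring
  have h2 : (S0-x)/(N0-1) - S0/N0 = (S0 - N0*x)/((N0-1)*N0) := by
    field_simp; ring
  have key : S1/N1 - S0/N0 - ((S1+x)/(N1+1) - (S0-x)/(N0-1))
      = (S1 - N1*x)/(N1*(N1+1)) + (S0 - N0*x)/((N0-1)*N0) := by
    rw [← h1, ← h2]; ring
  rw [key]
  have b1 : |(S1 - N1*x)/(N1*(N1+1))| ≤ 1/(N1+1) := by
    rw [abs_div, abs_of_pos (mul_pos p1 p2), div_le_iff₀ (mul_pos p1 p2)]
    have hb : |S1 - N1*x| ≤ N1 := by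
      rw [abs_le]; constructor <;> nlinarith
    calc |S1 - N1*x| ≤ N1 := hb
      _ = 1/(N1+1) * (N1*(N1+1)) := by field_simp
  have b2 : |(S0 - N0*x)/((N0-1)*N0)| ≤ 1/N0 := by
    rw [abs_div, abs_of_pos (mul_pos p4 p3), div_le_iff₀ (mul_pos p4 p3)]
    have hb : |S0 - N0*x| ≤ N0 - 1 := by
      rw [abs_le]; constructor <;> nlinarith
    calc |S0 - N0*x| ≤ N0 - 1 := hb
      _ = 1/N0 * ((N0-1)*N0) := by field_simp
  calc |(S1 - N1*x)/(N1*(N1+1)) + (S0 - N0*x)/((N0-1)*N0)|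
      ≤ |(S1 - N1*x)/(N1*(N1+1))| + |(S0 - N0*x)/((N0-1)*N0)| := abs_add_le _ _
    _ ≤ 1/(N1+1) + 1/N0 := by linarith

/-- Single-flip sensitivity bound: flipping one individual's attribute
from `0` to `1` changes the statistical parity gap by at most `1/(N1+1) + 1/N0`. -/
theorem sp_single_flip_bound {n : ℕ} (A : Fin n → Bool) (j0 : Fin n)
    (hN1 : 1 ≤ nAdv A) (hN0 : 2 ≤ nDis A) (hj0 : A j0 = false)
    (A' : Fin n → Bool) (hA' : A' = Function.update A j0 true)
    (h : Fin n → ℝ) (hh : ∀ j, h j ∈ Set.Icc (0 : ℝ) 1) :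
    |spGap A h - spGap A' h| ≤ 1 / ((nAdv A : ℝ) + 1) + 1 / (nDis A : ℝ) := by
  subst hA'
  set T := Finset.univ.filter (fun j => A j = true) with hT
  set F := Finset.univ.filter (fun j => A j = false) with hF
  have hj0T : j0 ∉ T := by simp [hT, hj0]
  have hj0F : j0 ∈ F := by simp [hF, hj0]
  have hT' : Finset.univ.filter (fun j => Function.update A j0 true j = true)
      = insert j0 T := by
    ext j
    by_cases hj : j = j0 <;> simp [hT, Function.update_apply, hj, hj0]
  have hF' : Finset.univ.filter (fun j => Function.update A j0 true j = false)
      = F.erase j0 := by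
    ext j
    by_cases hj : j = j0 <;> simp [hF, Function.update_apply, hj]
  have hNA' : nAdv (Function.update A j0 true) = T.card + 1 := by
    rw [nAdv, hT', card_insert_of_notMem hj0T]
  have hND' : nDis (Function.update A j0 true) = F.card - 1 := by
    rw [nDis, hF', card_erase_of_mem hj0F]
  have hsum1 : ∑ j ∈ insert j0 T, h j = (∑ j ∈ T, h j) + h j0 := by
    rw [Finset.sum_insert hj0T]; ring
  have hsum0 : ∑ j ∈ F.erase j0, h j = (∑ j ∈ F, h j) - h j0 :=
    Finset.sum_erase_eq_sub hj0F
  have hNAcard : nAdv A = T.card := rfl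
  have hNDcard : nDis A = F.card := rfl
  have hFpos : 1 ≤ F.card := by omega
  have hcast : ((F.card - 1 : ℕ) : ℝ) = (F.card : ℝ) - 1 := by
    push_cast [Nat.cast_sub hFpos]; ring
  rw [spGap, spGap, hT', hF', hNA', hND', hsum1, hsum0, hcast, hNAcard, hNDcard]
  push_cast
  apply sp_aux
  · exact_mod_cast hN1
  · exact_mod_cast hN0
  · exact (hh j0).1
  · exact (hh j0).2
  · exact Finset.sum_nonneg fun j _ => (hh j).1
  · calc ∑ j ∈ T, h j ≤ ∑ _j ∈ T, (1:ℝ) := Finset.sum_le_sum fun j _ => (hh j).2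
      _ = T.card := by simp
  · exact Finset.single_le_sum (fun j _ => (hh j).1) hj0F
  · have : ∑ j ∈ F.erase j0, h j ≤ (F.erase j0).card := by
      calc ∑ j ∈ F.erase j0, h j ≤ ∑ _j ∈ F.erase j0, (1:ℝ) :=
            Finset.sum_le_sum fun j _ => (hh j).2
        _ = (F.erase j0).card := by simp
    rw [hsum0, card_erase_of_mem hj0F, hcast] at this
    linarith
end

section
/- (Maximum at boundaries for the statistical parity smooth sensitivity) Let β > 0 and m > 0 be real numbers and let N1 ≥ 1 and N0 ≥ 2 be integers. Then the maximum over integers k ∈ {0, 1, …, N0 − 2} of e^{−kβ} · ( m/(N1 + k + 1) + m/(N0 − k) ) equals max( m/(N1 + 1) + m/N0 , e^{−(N0 − 2)β} · ( m/(N1 + N0 − 1) + m/2 ) ). -/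
/-!
Extend the objective to the real interval `[0, N0 - 2]`. Each summand `e^{-βx} / (a ± x)` is
the exponential of the convex function `-βx - log (a ± x)`, so the extension is
convex (as `m > 0`), and a convex function on an interval is bounded by its values at the two
endpoints, which are themselves among the integer points.
-/

open Set Real

theorem ConvexOn.rexp {s : Set ℝ} {f : ℝ → ℝ} (hf : ConvexOn ℝ s f) :
    ConvexOn ℝ s fun x => exp (f x) := by
  refine ⟨hf.1, fun x hx y hy a b ha hb hab => ?_⟩
  calc exp (f (a • x + b • y)) ≤ exp (a • f x + b • f y) :=
        exp_le_exp.2 (hf.2 hx hy ha hb hab)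
    _ ≤ a • exp (f x) + b • exp (f y) :=
      convexOn_exp.2 (mem_univ _) (mem_univ _) ha hb hab

theorem convexOn_neg_log_affine (a b : ℝ) :
    ConvexOn ℝ {x | 0 < a + b * x} fun x => -log (a + b * x) :=
  (strictConcaveOn_log_Ioi.concaveOn.comp_affineMap
    (AffineMap.const ℝ ℝ a + b • AffineMap.id ℝ ℝ)).neg

theorem convexOn_exp_mul_div_affine (a b c : ℝ) :
    ConvexOn ℝ {x | 0 < a + b * x} fun x => exp (c * x) / (a + b * x) := by
  have hlog := convexOn_neg_log_affine a b
  have h : ConvexOn ℝ {x | 0 < a + b * x} fun x => c * x + -log (a + b * x) :=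
    ((LinearMap.mul ℝ ℝ c).convexOn hlog.1).add hlog
  refine h.rexp.congr fun x hx => ?_
  simp only [exp_add, exp_neg, exp_log hx.out, div_eq_mul_inv]

theorem ConvexOn.sup'_range_natCast_eq_max {f : ℝ → ℝ} {n : ℕ}
    (hf : ConvexOn ℝ (Icc (0 : ℝ) n) f) (h : (Finset.range (n + 1)).Nonempty) :
    (Finset.range (n + 1)).sup' h (fun k : ℕ => f k) = max (f 0) (f n) := by
  refine le_antisymm (Finset.sup'_le _ _ fun k hk => ?_) (max_le ?_ ?_)
  · have hk : (k : ℝ) ≤ n := by exact_mod_cast Finset.mem_range_succ_iff.mp hk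
    exact hf.le_max_of_mem_Icc (left_mem_Icc.2 n.cast_nonneg) (right_mem_Icc.2 n.cast_nonneg)
      ⟨k.cast_nonneg, hk⟩
  · exact Finset.le_sup'_of_le _ (Finset.mem_range.2 n.succ_pos) (by simp)
  · exact Finset.le_sup' (fun k : ℕ => f k) (Finset.self_mem_range_succ n)

/-- Maximum at boundaries for the statistical parity smooth
sensitivity: the maximum over integers `k ∈ {0, …, N0 - 2}` of
`e^{-kβ}·(m/(N1 + k + 1) + m/(N0 - k))` equals
`max( m/(N1+1) + m/N0 , e^{-(N0-2)β}·(m/(N1+N0-1) + m/2) )`. -/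
theorem sp_smooth_sensitivity_max (β m : ℝ) (hm : 0 < m)
    (N1 N0 : ℕ) (hN0 : 2 ≤ N0) :
    (Finset.range (N0 - 1)).sup' (Finset.nonempty_range_iff.mpr (by omega))
      (fun k => Real.exp (-(k : ℝ) * β) * (m / ((N1 : ℝ) + k + 1) + m / ((N0 : ℝ) - k)))
    = max (m / ((N1 : ℝ) + 1) + m / (N0 : ℝ))
        (Real.exp (-((N0 : ℝ) - 2) * β) * (m / ((N1 : ℝ) + (N0 : ℝ) - 1) + m / 2)) := by
  obtain ⟨n, rfl⟩ : ∃ n, N0 = n + 2 := ⟨N0 - 2, by omega⟩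
  set F : ℝ → ℝ := fun x =>
    exp (-x * β) * (m / (N1 + x + 1) + m / (((n + 2 : ℕ) : ℝ) - x))
  have hF : ConvexOn ℝ (Icc (0 : ℝ) n) F := by
    have h₁ := (convexOn_exp_mul_div_affine (N1 + 1) 1 (-β)).subset
      (fun x (hx : x ∈ Icc (0 : ℝ) n) => show (0 : ℝ) < N1 + 1 + 1 * x by linarith [hx.1])
      (convex_Icc _ _)
    have h₂ := (convexOn_exp_mul_div_affine (n + 2) (-1) (-β)).subset
      (fun x (hx : x ∈ Icc (0 : ℝ) n) => show (0 : ℝ) < n + 2 + -1 * x by linarith [hx.2])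
      (convex_Icc _ _)
    refine ((h₁.add h₂).smul hm.le).congr fun x hx => ?_
    simp only [F, Pi.add_apply, smul_eq_mul]
    push_cast
    ring_nf
  refine (hF.sup'_range_natCast_eq_max _).trans ?_
  congr 1
  · simp [F]
  · simp only [F]
    push_cast
    ring_nf
end

section
/- (Local sensitivity at Hamming distance k) Let A be a protected-attribute vector of size n with group sizes N0 = |{j : a_j = 0}| and N1 = |{j : a_j = 1}| satisfying N0 ≤ N1, and let k be an integer with 0 ≤ k ≤ N0 − 2. Let Ā be any protected-attribute vector whose Hamming distance from A is at most k, and let A″ differ from Ā at exactly one index; assume both Ā and A″ have at least one individual in each group. Then for every classifier h with predictions in [0,1], |SP(Ā, h) − SP(A″, h)| ≤ 1/(N1 + k + 1) + 1/(N0 − k). -/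
open Finset

/-- Arithmetic core: convexity of `1/x` on fixed-sum pairs. -/
lemma sp_arith (a b p q : ℝ) (hb : 0 < b) (hq : 0 < q) (hsum : p + q = a + b)
    (hbp : b ≤ p) (hpa : p ≤ a) : 1 / p + 1 / q ≤ 1 / a + 1 / b := by
  have hp : 0 < p := lt_of_lt_of_le hb hbp
  have ha : 0 < a := lt_of_lt_of_le hp hpa
  have h1 : a * b ≤ p * q := by nlinarith [mul_nonneg (sub_nonneg.2 hbp) (sub_nonneg.2 hpa)]
  rw [div_add_div _ _ (ne_of_gt hp) (ne_of_gt hq), div_add_div _ _ (ne_of_gt ha) (ne_of_gt hb),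
    div_le_div_iff₀ (by positivity) (by positivity)]
  nlinarith [mul_pos hp hq, mul_pos ha hb]

/-- One element leaves a group of size `m ≥ 2`. -/
lemma sp_flip_out (m S t : ℝ) (hm : 2 ≤ m) (ht0 : 0 ≤ t) (ht1 : t ≤ 1)
    (hS0 : 0 ≤ S - t) (hS1 : S - t ≤ m - 1) :
    |S / m - (S - t) / (m - 1)| ≤ 1 / m := by
  have hm0 : (0:ℝ) < m := by linarith
  have hm1 : (0:ℝ) < m - 1 := by linarith
  have key : S / m - (S - t) / (m - 1) = (t * m - S) / (m * (m - 1)) := by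
    field_simp; ring
  rw [key, abs_div, abs_of_pos (by positivity : (0:ℝ) < m * (m - 1)),
    div_le_div_iff₀ (by positivity) hm0]
  have habs : |t * m - S| ≤ m - 1 := abs_le.2 ⟨by nlinarith, by nlinarith⟩
  nlinarith [abs_nonneg (t * m - S)]

/-- One element joins a group of size `m ≥ 1`. -/
lemma sp_flip_in (m S t : ℝ) (hm : 1 ≤ m) (ht0 : 0 ≤ t) (ht1 : t ≤ 1)
    (hS0 : 0 ≤ S) (hS1 : S ≤ m) :
    |S / m - (S + t) / (m + 1)| ≤ 1 / (m + 1) := by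
  have hm0 : (0:ℝ) < m := by linarith
  have hm1 : (0:ℝ) < m + 1 := by linarith
  have key : S / m - (S + t) / (m + 1) = (S - t * m) / (m * (m + 1)) := by
    field_simp; ring
  rw [key, abs_div, abs_of_pos (by positivity : (0:ℝ) < m * (m + 1)),
    div_le_div_iff₀ (by positivity) hm1]
  have habs : |S - t * m| ≤ m := abs_le.2 ⟨by nlinarith, by nlinarith⟩
  nlinarith [abs_nonneg (S - t * m)]

/-- Key single-flip bound: if `Abar i = true`, `A'' i = false`, and they agree
elsewhere, then the SP gap moves by at most `1/(nAdv Abar) + 1/(nDis A'')`. -/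
lemma sp_one_flip {n : ℕ} (Abar A'' : Fin n → Bool) (i : Fin n)
    (hi1 : Abar i = true) (hi2 : A'' i = false)
    (hagree : ∀ j, j ≠ i → Abar j = A'' j)
    (h1' : 1 ≤ nAdv A'') (h0 : 1 ≤ nDis Abar)
    (h : Fin n → ℝ) (hh : ∀ j, h j ∈ Set.Icc (0 : ℝ) 1) :
    nAdv A'' + 1 = nAdv Abar ∧ nDis A'' = nDis Abar + 1 ∧
      |spGap Abar h - spGap A'' h| ≤ 1 / (nAdv Abar : ℝ) + 1 / (nDis A'' : ℝ) := by
  classical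
  set T := Finset.univ.filter (fun j => Abar j = true) with hTdef
  set F := Finset.univ.filter (fun j => Abar j = false) with hFdef
  have hiT : i ∈ T := by simp [hTdef, hi1]
  have hiF : i ∉ F := by simp [hFdef, hi1]
  have hT : Finset.univ.filter (fun j => A'' j = true) = T.erase i := by
    ext j
    simp only [hTdef, Finset.mem_erase, Finset.mem_filter, Finset.mem_univ, true_and]
    constructor
    · intro hj
      have hji : j ≠ i := by rintro rfl; rw [hi2] at hj; cases hj
      exact ⟨hji, (hagree j hji).trans hj⟩
    · rintro ⟨hji, hj⟩
      rw [← hagree j hji]; exact hj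
  have hF : Finset.univ.filter (fun j => A'' j = false) = insert i F := by
    ext j
    simp only [hFdef, Finset.mem_insert, Finset.mem_filter, Finset.mem_univ, true_and]
    constructor
    · intro hj
      by_cases hji : j = i
      · exact Or.inl hji
      · exact Or.inr ((hagree j hji).trans hj)
    · rintro (rfl | hj)
      · exact hi2
      · have hji : j ≠ i := by rintro rfl; rw [hi1] at hj; cases hj
        rw [← hagree j hji]; exact hj
  have hcardT : nAdv A'' = T.card - 1 := by
    rw [nAdv, hT, Finset.card_erase_of_mem hiT]
  have hcardT' : nAdv A'' + 1 = nAdv Abar := by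
    rw [hcardT, nAdv, ← hTdef]
    have : 1 ≤ T.card := Finset.card_pos.2 ⟨i, hiT⟩
    omega
  have hcardF : nDis A'' = nDis Abar + 1 := by
    rw [nDis, hF, Finset.card_insert_of_notMem hiF]; rfl
  refine ⟨hcardT', hcardF, ?_⟩
  have hsumT : ∑ j ∈ Finset.univ.filter (fun j => A'' j = true), h j
      = (∑ j ∈ T, h j) - h i := by
    rw [hT, Finset.sum_erase_eq_sub hiT]
  have hsumF : ∑ j ∈ Finset.univ.filter (fun j => A'' j = false), h j
      = (∑ j ∈ F, h j) + h i := by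
    rw [hF, Finset.sum_insert hiF]; ring
  -- real casts of group sizes
  have hm1 : (2:ℝ) ≤ (nAdv Abar : ℝ) := by
    have : 2 ≤ nAdv Abar := by omega
    exact_mod_cast this
  have hm0 : (1:ℝ) ≤ (nDis Abar : ℝ) := by exact_mod_cast h0
  have hcast1 : (nAdv A'' : ℝ) = (nAdv Abar : ℝ) - 1 := by
    rw [← hcardT']; push_cast; ring
  have hcast0 : (nDis A'' : ℝ) = (nDis Abar : ℝ) + 1 := by
    rw [hcardF]; push_cast; ring
  have hSa0 : 0 ≤ (∑ j ∈ T, h j) - h i := by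
    rw [← hsumT]
    exact Finset.sum_nonneg fun j _ => (hh j).1
  have hSa1 : (∑ j ∈ T, h j) - h i ≤ (nAdv Abar : ℝ) - 1 := by
    rw [← hsumT, ← hcast1]
    calc ∑ j ∈ Finset.univ.filter (fun j => A'' j = true), h j
        ≤ (Finset.univ.filter (fun j => A'' j = true)).card • (1:ℝ) :=
          Finset.sum_le_card_nsmul _ _ 1 fun j _ => (hh j).2
      _ = (nAdv A'' : ℝ) := by rw [nsmul_eq_mul, mul_one]; rfl
  have hSb0 : 0 ≤ ∑ j ∈ F, h j := Finset.sum_nonneg fun j _ => (hh j).1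
  have hSb1 : (∑ j ∈ F, h j) ≤ (nDis Abar : ℝ) := by
    calc (∑ j ∈ F, h j) ≤ F.card • (1:ℝ) :=
          Finset.sum_le_card_nsmul _ _ 1 fun j _ => (hh j).2
      _ = (nDis Abar : ℝ) := by rw [nsmul_eq_mul, mul_one]; rfl
  have hsp : spGap Abar h - spGap A'' h =
      ((∑ j ∈ T, h j) / (nAdv Abar : ℝ) -
        ((∑ j ∈ T, h j) - h i) / ((nAdv Abar : ℝ) - 1)) -
      ((∑ j ∈ F, h j) / (nDis Abar : ℝ) -
        ((∑ j ∈ F, h j) + h i) / ((nDis Abar : ℝ) + 1)) := by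
    rw [spGap, spGap, hsumT, hsumF, hcast1, hcast0, ← hTdef, ← hFdef]
    ring
  rw [hsp, hcast0]
  calc |((∑ j ∈ T, h j) / (nAdv Abar : ℝ) -
        ((∑ j ∈ T, h j) - h i) / ((nAdv Abar : ℝ) - 1)) -
      ((∑ j ∈ F, h j) / (nDis Abar : ℝ) -
        ((∑ j ∈ F, h j) + h i) / ((nDis Abar : ℝ) + 1))|
      ≤ |(∑ j ∈ T, h j) / (nAdv Abar : ℝ) -
        ((∑ j ∈ T, h j) - h i) / ((nAdv Abar : ℝ) - 1)| +
        |(∑ j ∈ F, h j) / (nDis Abar : ℝ) -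
        ((∑ j ∈ F, h j) + h i) / ((nDis Abar : ℝ) + 1)| := abs_sub _ _
    _ ≤ 1 / (nAdv Abar : ℝ) + 1 / ((nDis Abar : ℝ) + 1) := by
        gcongr
        · exact sp_flip_out _ _ _ hm1 (hh i).1 (hh i).2 hSa0 hSa1
        · exact sp_flip_in _ _ _ hm0 (hh i).1 (hh i).2 hSb0 hSb1

/-- Local sensitivity at Hamming distance `k`: if `Ā` is within Hamming
distance `k ≤ N0 - 2` of `A` (where `N0 ≤ N1` are the group sizes of `A`), and `A''`
differs from `Ā` at exactly one index, both having at least one individual in each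
group, then `|SP(Ā,h) - SP(A'',h)| ≤ 1/(N1 + k + 1) + 1/(N0 - k)`. -/
theorem sp_local_sensitivity_at_distance {n : ℕ} (A Abar A'' : Fin n → Bool) (k : ℕ)
    (hord : nDis A ≤ nAdv A) (hk : (k : ℤ) ≤ (nDis A : ℤ) - 2)
    (hham : (Finset.univ.filter (fun j => A j ≠ Abar j)).card ≤ k)
    (hdiff : (Finset.univ.filter (fun j => Abar j ≠ A'' j)).card = 1)
    (h1 : 1 ≤ nAdv Abar) (h0 : 1 ≤ nDis Abar)
    (h1' : 1 ≤ nAdv A'') (h0' : 1 ≤ nDis A'')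
    (h : Fin n → ℝ) (hh : ∀ j, h j ∈ Set.Icc (0 : ℝ) 1) :
    |spGap Abar h - spGap A'' h| ≤
      1 / ((nAdv A : ℝ) + k + 1) + 1 / ((nDis A : ℝ) - k) := by
  classical
  obtain ⟨i, hi⟩ := Finset.card_eq_one.mp hdiff
  have hine : Abar i ≠ A'' i := by
    have : i ∈ Finset.univ.filter (fun j => Abar j ≠ A'' j) := by
      rw [hi]; exact Finset.mem_singleton_self i
    simpa using this
  have hagree : ∀ j, j ≠ i → Abar j = A'' j := by
    intro j hj
    by_contra hc
    have : j ∈ Finset.univ.filter (fun j => Abar j ≠ A'' j) := by simpa using hc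
    rw [hi] at this
    exact hj (Finset.mem_singleton.mp this)
  set D := Finset.univ.filter (fun j => A j ≠ Abar j) with hDdef
  -- Hamming bounds on group sizes of Abar
  have hadv_le : nAdv Abar ≤ nAdv A + D.card := by
    have hsub : Finset.univ.filter (fun j => Abar j = true) ⊆
        Finset.univ.filter (fun j => A j = true) ∪ D := by
      intro j hj
      simp only [hDdef, Finset.mem_union, Finset.mem_filter, Finset.mem_univ, true_and] at *
      by_cases hA : A j = true
      · exact Or.inl hA
      · exact Or.inr (fun he => hA (he.trans hj))
    calc nAdv Abar ≤ (Finset.univ.filter (fun j => A j = true) ∪ D).card :=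
          Finset.card_le_card hsub
      _ ≤ nAdv A + D.card := Finset.card_union_le _ _
  have hadv_ge : nAdv A ≤ nAdv Abar + D.card := by
    have hsub : Finset.univ.filter (fun j => A j = true) ⊆
        Finset.univ.filter (fun j => Abar j = true) ∪ D := by
      intro j hj
      simp only [hDdef, Finset.mem_union, Finset.mem_filter, Finset.mem_univ, true_and] at *
      by_cases hB : Abar j = true
      · exact Or.inl hB
      · exact Or.inr (fun he => hB (he.symm.trans hj))
    calc nAdv A ≤ (Finset.univ.filter (fun j => Abar j = true) ∪ D).card :=
          Finset.card_le_card hsub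
      _ ≤ nAdv Abar + D.card := Finset.card_union_le _ _
  have hdis_le : nDis Abar ≤ nDis A + D.card := by
    have hsub : Finset.univ.filter (fun j => Abar j = false) ⊆
        Finset.univ.filter (fun j => A j = false) ∪ D := by
      intro j hj
      simp only [hDdef, Finset.mem_union, Finset.mem_filter, Finset.mem_univ, true_and] at *
      by_cases hA : A j = false
      · exact Or.inl hA
      · exact Or.inr (fun he => hA (he.trans hj))
    calc nDis Abar ≤ (Finset.univ.filter (fun j => A j = false) ∪ D).card :=
          Finset.card_le_card hsub
      _ ≤ nDis A + D.card := Finset.card_union_le _ _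
  have hdis_ge : nDis A ≤ nDis Abar + D.card := by
    have hsub : Finset.univ.filter (fun j => A j = false) ⊆
        Finset.univ.filter (fun j => Abar j = false) ∪ D := by
      intro j hj
      simp only [hDdef, Finset.mem_union, Finset.mem_filter, Finset.mem_univ, true_and] at *
      by_cases hB : Abar j = false
      · exact Or.inl hB
      · exact Or.inr (fun he => hB (he.symm.trans hj))
    calc nDis A ≤ (Finset.univ.filter (fun j => Abar j = false) ∪ D).card :=
          Finset.card_le_card hsub
      _ ≤ nDis Abar + D.card := Finset.card_union_le _ _
  -- total count
  have htot : nAdv Abar + nDis Abar = n := by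
    rw [nAdv, nDis]
    have : Finset.univ.filter (fun j => Abar j = false) =
        Finset.univ.filter (fun j => ¬ Abar j = true) := by
      ext j; simp
    rw [this, Finset.card_filter_add_card_filter_not, Finset.card_univ, Fintype.card_fin]
  have htotA : nAdv A + nDis A = n := by
    rw [nAdv, nDis]
    have : Finset.univ.filter (fun j => A j = false) =
        Finset.univ.filter (fun j => ¬ A j = true) := by
      ext j; simp
    rw [this, Finset.card_filter_add_card_filter_not, Finset.card_univ, Fintype.card_fin]
  have hkN0 : k + 2 ≤ nDis A := by omega
  -- real-valued facts
  have hb_pos : (0:ℝ) < (nDis A : ℝ) - k := by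
    have : (k:ℝ) + 2 ≤ (nDis A : ℝ) := by exact_mod_cast hkN0
    linarith
  cases hBi : Abar i with
  | true =>
    have hAi : A'' i = false := by
      cases hA : A'' i with
      | true => exact absurd (hBi.trans hA.symm) hine
      | false => rfl
    obtain ⟨hc1, hc0, hbound⟩ := sp_one_flip Abar A'' i hBi hAi hagree h1' h0 h hh
    refine hbound.trans ?_
    -- apply arithmetic with p = nAdv Abar, q = nDis A''
    have hsum : (nAdv Abar : ℝ) + (nDis A'' : ℝ) = ((nAdv A : ℝ) + k + 1) + ((nDis A : ℝ) - k) := by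
      have e1 : nAdv Abar + nDis A'' = nAdv A + nDis A + 1 := by omega
      have e2 : (nAdv Abar : ℝ) + (nDis A'' : ℝ) = (nAdv A : ℝ) + (nDis A : ℝ) + 1 := by
        exact_mod_cast e1
      linarith
    exact sp_arith _ _ _ _ hb_pos (by have : 0 < nDis A'' := h0'; exact_mod_cast this) hsum
      (by
        have : nDis A ≤ nAdv Abar + k := by omega
        have h2 : (nDis A : ℝ) ≤ (nAdv Abar : ℝ) + k := by exact_mod_cast this
        linarith)
      (by
        have : nAdv Abar ≤ nAdv A + k := hadv_le.trans (by omega)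
        have h2 : (nAdv Abar : ℝ) ≤ (nAdv A : ℝ) + k := by exact_mod_cast this
        linarith)
  | false =>
    have hAi : A'' i = true := by
      cases hA : A'' i with
      | true => rfl
      | false => exact absurd (hBi.trans hA.symm) hine
    obtain ⟨hc1, hc0, hbound⟩ := sp_one_flip A'' Abar i hAi hBi
      (fun j hj => (hagree j hj).symm) h1 h0' h hh
    rw [abs_sub_comm]
    refine hbound.trans ?_
    have hsum : (nAdv A'' : ℝ) + (nDis Abar : ℝ) = ((nAdv A : ℝ) + k + 1) + ((nDis A : ℝ) - k) := by
      have e1 : nAdv A'' + nDis Abar = nAdv A + nDis A + 1 := by omega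
      have e2 : (nAdv A'' : ℝ) + (nDis Abar : ℝ) = (nAdv A : ℝ) + (nDis A : ℝ) + 1 := by
        exact_mod_cast e1
      linarith
    refine sp_arith _ _ _ _ hb_pos ?_ hsum ?_ ?_
    · have : 0 < nDis Abar := h0; exact_mod_cast this
    · have : nDis A ≤ nAdv A'' + k := by omega
      have h2 : (nDis A : ℝ) ≤ (nAdv A'' : ℝ) + k := by exact_mod_cast this
      linarith
    · have : nAdv A'' ≤ nAdv A + k + 1 := by omega
      have h2 : (nAdv A'' : ℝ) ≤ (nAdv A : ℝ) + k + 1 := by exact_mod_cast this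
      linarith
end

section
/- (Smooth-sensitivity bound for the statistical parity query, Theorem 5 sensitivity part, single model) Let A be a protected-attribute vector of size n with group sizes N0 = |{j : a_j = 0}| and N1 = |{j : a_j = 1}| satisfying 2 ≤ N0 ≤ N1, and let β > 0. Let Ā be any protected-attribute vector whose Hamming distance d from A satisfies d ≤ N0 − 2, and let A″ differ from Ā at exactly one index; assume both Ā and A″ have at least one individual in each group. Then for every classifier h with predictions in [0,1], e^{−βd} · |SP(Ā, h) − SP(A″, h)| ≤ max( 1/(N1 + 1) + 1/N0 , e^{−(N0 − 2)β} · ( 1/(n − 1) + 1/2 ) ). -/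
open Finset

/- ### Auxiliary real-analysis lemmas -/

private lemma avg_remove_bound (m S x : ℝ) (hm : 2 ≤ m) (hx0 : 0 ≤ x) (hx1 : x ≤ 1)
    (hS0 : 0 ≤ S - x) (hS1 : S - x ≤ m - 1) :
    |S / m - (S - x) / (m - 1)| ≤ 1 / m := by
  have hm0 : (0:ℝ) < m := by linarith
  have hm1 : (0:ℝ) < m - 1 := by linarith
  have key : S / m - (S - x) / (m - 1) = (m * x - S) / (m * (m - 1)) := by
    field_simp; ring
  rw [key, abs_div, abs_of_pos (by positivity : (0:ℝ) < m * (m-1)),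
    div_le_div_iff₀ (by positivity) hm0]
  have habs : |m * x - S| ≤ m - 1 := by
    rw [abs_le]; constructor <;> nlinarith
  nlinarith [abs_nonneg (m*x - S)]

private lemma avg_add_bound (M S x : ℝ) (hM : 1 ≤ M) (hx0 : 0 ≤ x) (hx1 : x ≤ 1)
    (hS0 : 0 ≤ S) (hS1 : S ≤ M) :
    |S / M - (S + x) / (M + 1)| ≤ 1 / (M + 1) := by
  have hM0 : (0:ℝ) < M := by linarith
  have hM1 : (0:ℝ) < M + 1 := by linarith
  have key : S / M - (S + x) / (M + 1) = (S - M * x) / (M * (M + 1)) := by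
    field_simp; ring
  rw [key, abs_div, abs_of_pos (by positivity : (0:ℝ) < M * (M+1)),
    div_le_div_iff₀ (by positivity) hM1]
  have habs : |S - M * x| ≤ M := by
    rw [abs_le]; constructor <;> nlinarith
  nlinarith [abs_nonneg (S - M*x)]

private lemma delta_bound (m M S1 S0 x : ℝ) (hm : 2 ≤ m) (hM : 1 ≤ M)
    (hx0 : 0 ≤ x) (hx1 : x ≤ 1) (hS1a : 0 ≤ S1 - x) (hS1b : S1 - x ≤ m - 1)
    (hS0a : 0 ≤ S0) (hS0b : S0 ≤ M) :
    |(S1/m - S0/M) - ((S1-x)/(m-1) - (S0+x)/(M+1))| ≤ 1/m + 1/(M+1) := by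
  have e1 := avg_remove_bound m S1 x hm hx0 hx1 hS1a hS1b
  have e2 := avg_add_bound M S0 x hM hx0 hx1 hS0a hS0b
  have e3 : (S1/m - S0/M) - ((S1-x)/(m-1) - (S0+x)/(M+1))
      = (S1/m - (S1-x)/(m-1)) - (S0/M - (S0+x)/(M+1)) := by ring
  rw [e3]
  calc |(S1/m - (S1-x)/(m-1)) - (S0/M - (S0+x)/(M+1))|
      ≤ |S1/m - (S1-x)/(m-1)| + |S0/M - (S0+x)/(M+1)| := abs_sub _ _
    _ ≤ 1/m + 1/(M+1) := add_le_add e1 e2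

private lemma phi_mono (c m lo : ℝ) (hlo : 0 < lo) (h1 : lo ≤ m) (h2 : m ≤ c - lo) :
    1/m + 1/(c-m) ≤ 1/lo + 1/(c-lo) := by
  have hm : 0 < m := lt_of_lt_of_le hlo h1
  have hcm : 0 < c - m := lt_of_lt_of_le hlo (by linarith)
  have hclo : 0 < c - lo := by linarith
  have hc : 0 < c := by linarith
  rw [div_add_div _ _ (ne_of_gt hm) (ne_of_gt hcm),
    div_add_div _ _ (ne_of_gt hlo) (ne_of_gt hclo),
    div_le_div_iff₀ (by positivity) (by positivity)]
  nlinarith [mul_nonneg (sub_nonneg.2 h1) (sub_nonneg.2 h2), hc.le]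

private lemma gcvx (x y : ℝ) (hx : 2 ≤ x) (hy : 2 ≤ y) :
    (1/x + 1/y)^2 ≤ (1/(x+1) + 1/(y-1)) * (1/(x-1) + 1/(y+1)) := by
  have hx0 : (0:ℝ) < x := by linarith
  have hy0 : (0:ℝ) < y := by linarith
  have hx1 : (0:ℝ) < x - 1 := by linarith
  have hy1 : (0:ℝ) < y - 1 := by linarith
  have hx2 : (0:ℝ) < x + 1 := by linarith
  have hy2 : (0:ℝ) < y + 1 := by linarith
  have t1 : (1/x)^2 ≤ 1/(x+1) * (1/(x-1)) := by
    rw [div_pow, one_pow, div_mul_div_comm, one_mul,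
      div_le_div_iff₀ (by positivity) (by positivity)]
    nlinarith
  have t2 : (1/y)^2 ≤ 1/(y-1) * (1/(y+1)) := by
    rw [div_pow, one_pow, div_mul_div_comm, one_mul,
      div_le_div_iff₀ (by positivity) (by positivity)]
    nlinarith
  have t3 : 2 * (1/x * (1/y)) ≤ 1/(x+1) * (1/(y+1)) + 1/(x-1) * (1/(y-1)) := by
    rw [show (2:ℝ) * (1/x * (1/y)) = 2/(x*y) by ring, div_mul_div_comm, div_mul_div_comm,
      one_mul, div_add_div _ _ (by positivity) (by positivity),
      div_le_div_iff₀ (by positivity) (by positivity)]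
    nlinarith [sq_nonneg (x - y), sq_nonneg (x + y), mul_pos hx0 hy0]
  nlinarith [t1, t2, t3]

private lemma seq_max_bound (β a b : ℝ) (hβ : 0 < β) (hb : 1 ≤ b) (D : ℕ)
    (ha : (D:ℝ) + 2 ≤ a) :
    ∀ d ≤ D, Real.exp (-β*(d:ℝ)) * (1/(a-(d:ℝ)) + 1/(b+(d:ℝ))) ≤
      max (1/a + 1/b) (Real.exp (-β*(D:ℝ)) * (1/(a-(D:ℝ)) + 1/(b+(D:ℝ)))) := by
  set S : ℕ → ℝ := fun k => Real.exp (-β*(k:ℝ)) * (1/(a-(k:ℝ)) + 1/(b+(k:ℝ))) with hS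
  have hak : ∀ k : ℕ, k ≤ D → (2:ℝ) ≤ a - k := by
    intro k hk
    have : (k:ℝ) ≤ D := Nat.cast_le.2 hk
    linarith
  have hbk : ∀ k : ℕ, (1:ℝ) ≤ b + k := by
    intro k
    have : (0:ℝ) ≤ k := Nat.cast_nonneg k
    linarith
  have hSpos : ∀ k, k ≤ D → 0 < S k := by
    intro k hk
    have h1 := hak k hk
    have h2 := hbk k
    have : (0:ℝ) < 1/(a-k) + 1/(b+k) := by positivity
    simp only [hS]
    positivity
  have hsq : ∀ k, k + 2 ≤ D → S (k+1)^2 ≤ S k * S (k+2) := by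
    intro k hk
    have hkD : ((k:ℝ)+2) ≤ D := by exact_mod_cast Nat.cast_le.2 hk
    have hDa : (D:ℝ) ≤ a - 2 := by linarith
    have hx : 2 ≤ a - ((k:ℝ)+1) := by linarith
    have hy : 2 ≤ b + ((k:ℝ)+1) := by
      have := hbk k
      linarith
    have gsq : (1/(a-((k:ℝ)+1)) + 1/(b+((k:ℝ)+1)))^2
        ≤ (1/(a-(k:ℝ)) + 1/(b+(k:ℝ))) * (1/(a-((k:ℝ)+2)) + 1/(b+((k:ℝ)+2))) := by
      have key := gcvx (a-((k:ℝ)+1)) (b+((k:ℝ)+1)) hx hy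
      have e1 : a - (k:ℝ) = (a-((k:ℝ)+1)) + 1 := by ring
      have e2 : a - ((k:ℝ)+2) = (a-((k:ℝ)+1)) - 1 := by ring
      have e3 : b + (k:ℝ) = (b+((k:ℝ)+1)) - 1 := by ring
      have e4 : b + ((k:ℝ)+2) = (b+((k:ℝ)+1)) + 1 := by ring
      rw [e1, e2, e3, e4]
      exact key
    have hexp : Real.exp (-β*((k:ℝ)+1))^2
        = Real.exp (-β*(k:ℝ)) * Real.exp (-β*((k:ℝ)+2)) := by
      rw [sq, ← Real.exp_add, ← Real.exp_add]
      ring_nf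
    simp only [hS]
    push_cast
    calc (Real.exp (-β*((k:ℝ)+1)) * (1/(a-((k:ℝ)+1)) + 1/(b+((k:ℝ)+1))))^2
        = (Real.exp (-β*(k:ℝ)) * Real.exp (-β*((k:ℝ)+2))) *
            (1/(a-((k:ℝ)+1)) + 1/(b+((k:ℝ)+1)))^2 := by rw [mul_pow, hexp]
      _ ≤ (Real.exp (-β*(k:ℝ)) * Real.exp (-β*((k:ℝ)+2))) *
            ((1/(a-(k:ℝ)) + 1/(b+(k:ℝ))) * (1/(a-((k:ℝ)+2)) + 1/(b+((k:ℝ)+2)))) := by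
          apply mul_le_mul_of_nonneg_left gsq (by positivity)
      _ = (Real.exp (-β*(k:ℝ)) * (1/(a-(k:ℝ)) + 1/(b+(k:ℝ)))) *
            (Real.exp (-β*((k:ℝ)+2)) * (1/(a-((k:ℝ)+2)) + 1/(b+((k:ℝ)+2)))) := by ring
  have step : ∀ k, k + 2 ≤ D → S k ≤ S (k+1) → S (k+1) ≤ S (k+2) := by
    intro k hk hinc
    have p1 := hSpos (k+1) (by omega)
    have p2 := hSpos (k+2) (by omega)
    have hq := hsq k hk
    nlinarith [mul_le_mul_of_nonneg_right hinc p2.le]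
  have tail : ∀ t k, k + 1 + t = D → S k ≤ S (k+1) → S (k+1) ≤ S D := by
    intro t
    induction t with
    | zero =>
      intro k hk _
      have : D = k + 1 := by omega
      rw [this]
    | succ t ih =>
      intro k hk hinc
      have h2 : k + 2 ≤ D := by omega
      have s2 := step k h2 hinc
      exact le_trans s2 (ih (k+1) (by omega) s2)
  have main : ∀ d, d ≤ D → S d ≤ max (S 0) (S D) := by
    intro d
    induction d with
    | zero => intro _; exact le_max_left _ _
    | succ d ih =>
      intro hdD
      by_cases hc : S d ≤ S (d+1)
      · exact le_trans (tail (D - (d+1)) d (by omega) hc) (le_max_right _ _)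
      · exact le_trans (le_of_not_ge hc) (ih (by omega))
  intro d hd
  have hconc := main d hd
  have hS0 : S 0 = 1/a + 1/b := by simp [hS]
  rw [hS0] at hconc
  exact hconc

/- ### Counting lemmas -/

private lemma count_le {n : ℕ} (A B : Fin n → Bool) (c : Bool) :
    (univ.filter (fun j => A j = c)).card ≤
      (univ.filter (fun j => B j = c)).card + (univ.filter (fun j => A j ≠ B j)).card := by
  calc (univ.filter (fun j => A j = c)).card
      ≤ ((univ.filter (fun j => B j = c)) ∪ (univ.filter (fun j => A j ≠ B j))).card := by
        apply card_le_card
        intro j hj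
        simp only [mem_filter, mem_union, mem_univ, true_and, ne_eq] at *
        by_cases hAB : A j = B j
        · left; rw [← hAB]; exact hj
        · right; exact hAB
    _ ≤ _ := card_union_le _ _

private lemma adv_add_dis {n : ℕ} (B : Fin n → Bool) : nAdv B + nDis B = n := by
  unfold nAdv nDis
  have e : (univ.filter (fun j : Fin n => B j = false))
      = (univ.filter (fun j => ¬ (B j = true))) := by
    apply Finset.filter_congr
    intro j _
    simp
  rw [e, Finset.card_filter_add_card_filter_not]
  simp

private lemma filter_not_true {n : ℕ} (B : Fin n → Bool) :
    univ.filter (fun j => (!(B j)) = true) = univ.filter (fun j => B j = false) := by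
  apply Finset.filter_congr
  intro j _
  simp

private lemma filter_not_false {n : ℕ} (B : Fin n → Bool) :
    univ.filter (fun j => (!(B j)) = false) = univ.filter (fun j => B j = true) := by
  apply Finset.filter_congr
  intro j _
  simp

private lemma nAdv_not {n : ℕ} (B : Fin n → Bool) : nAdv (fun j => !(B j)) = nDis B := by
  simp only [nAdv, nDis, filter_not_true]

private lemma nDis_not {n : ℕ} (B : Fin n → Bool) : nDis (fun j => !(B j)) = nAdv B := by
  simp only [nAdv, nDis, filter_not_false]

private lemma spGap_not {n : ℕ} (B : Fin n → Bool) (h : Fin n → ℝ) :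
    spGap (fun j => !(B j)) h = - spGap B h := by
  simp only [spGap, nAdv_not, nDis_not, filter_not_true, filter_not_false]
  ring

/- ### Local sensitivity bound (single swapped index, advantaged loses a member) -/

private lemma sp_local_bound {n : ℕ} (Abar A'' : Fin n → Bool) (j0 : Fin n)
    (hB : Abar j0 = true) (hA : A'' j0 = false)
    (hagree : ∀ j, j ≠ j0 → Abar j = A'' j)
    (hm2' : 1 ≤ nAdv A'') (hM1 : 1 ≤ nDis Abar)
    (h : Fin n → ℝ) (hh : ∀ j, h j ∈ Set.Icc (0 : ℝ) 1) :
    |spGap Abar h - spGap A'' h| ≤ 1/(nAdv Abar : ℝ) + 1/((nDis Abar : ℝ) + 1) := by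
  classical
  have hTj0 : j0 ∈ univ.filter (fun j => Abar j = true) := mem_filter.mpr ⟨mem_univ _, hB⟩
  have hFj0 : j0 ∉ univ.filter (fun j => Abar j = false) := by simp [hB]
  have hT'' : univ.filter (fun j => A'' j = true)
      = (univ.filter (fun j => Abar j = true)).erase j0 := by
    ext j
    simp only [mem_filter, mem_erase, mem_univ, true_and]
    constructor
    · intro hj
      have hjne : j ≠ j0 := by
        rintro rfl
        rw [hA] at hj
        exact Bool.false_ne_true hj
      exact ⟨hjne, by rw [hagree j hjne]; exact hj⟩
    · rintro ⟨hjne, hj⟩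
      rw [← hagree j hjne]
      exact hj
  have hF'' : univ.filter (fun j => A'' j = false)
      = insert j0 (univ.filter (fun j => Abar j = false)) := by
    ext j
    simp only [mem_filter, mem_insert, mem_univ, true_and]
    constructor
    · intro hj
      by_cases hjne : j = j0
      · exact Or.inl hjne
      · exact Or.inr (by rw [hagree j hjne]; exact hj)
    · intro hj
      rcases hj with rfl | hj
      · exact hA
      · by_cases hjne : j = j0
        · subst hjne; exact hA
        · rw [← hagree j hjne]; exact hj
  have hm2 : 2 ≤ nAdv Abar := by
    have h' := hm2'
    simp only [nAdv, hT'', card_erase_of_mem hTj0] at h'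
    simp only [nAdv]
    omega
  simp only [nAdv, nDis] at hm2 hM1 ⊢
  have h1 : 1 ≤ (univ.filter (fun j => Abar j = true)).card := by omega
  set S1 := ∑ j ∈ univ.filter (fun j => Abar j = true), h j with hS1def
  set S0 := ∑ j ∈ univ.filter (fun j => Abar j = false), h j with hS0def
  have hx0 := (hh j0).1
  have hx1 := (hh j0).2
  have hsub : ∑ j ∈ (univ.filter (fun j => Abar j = true)).erase j0, h j = S1 - h j0 :=
    Finset.sum_erase_eq_sub hTj0
  have hS1a : 0 ≤ S1 - h j0 := by
    rw [← hsub]; exact Finset.sum_nonneg (fun j _ => (hh j).1)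
  have hcastT : (((univ.filter (fun j => Abar j = true)).card - 1 : ℕ) : ℝ)
      = ((univ.filter (fun j => Abar j = true)).card : ℝ) - 1 := by
    rw [Nat.cast_sub h1, Nat.cast_one]
  have hS1b : S1 - h j0 ≤ ((univ.filter (fun j => Abar j = true)).card : ℝ) - 1 := by
    rw [← hsub]
    calc ∑ j ∈ (univ.filter (fun j => Abar j = true)).erase j0, h j
        ≤ ∑ j ∈ (univ.filter (fun j => Abar j = true)).erase j0, (1:ℝ) :=
          Finset.sum_le_sum (fun j _ => (hh j).2)
      _ = (((univ.filter (fun j => Abar j = true)).erase j0).card : ℝ) := by simp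
      _ = _ := by rw [card_erase_of_mem hTj0, hcastT]
  have hS0a : 0 ≤ S0 := Finset.sum_nonneg (fun j _ => (hh j).1)
  have hS0b : S0 ≤ ((univ.filter (fun j => Abar j = false)).card : ℝ) := by
    calc S0 ≤ ∑ j ∈ univ.filter (fun j => Abar j = false), (1:ℝ) :=
          Finset.sum_le_sum (fun j _ => (hh j).2)
      _ = _ := by simp
  have g2 : spGap A'' h
      = (S1 - h j0) / (((univ.filter (fun j => Abar j = true)).card : ℝ) - 1)
        - (S0 + h j0) / (((univ.filter (fun j => Abar j = false)).card : ℝ) + 1) := by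
    simp only [spGap, nAdv, nDis, hT'', hF'', hsub, Finset.sum_insert hFj0,
      card_erase_of_mem hTj0, card_insert_of_notMem hFj0, hcastT, Nat.cast_add, Nat.cast_one]
    ring
  have g1 : spGap Abar h
      = S1 / ((univ.filter (fun j => Abar j = true)).card : ℝ)
        - S0 / ((univ.filter (fun j => Abar j = false)).card : ℝ) := rfl
  rw [g1, g2]
  exact delta_bound _ _ S1 S0 (h j0) (by exact_mod_cast hm2) (by exact_mod_cast hM1)
    hx0 hx1 hS1a hS1b hS0a hS0b

/-- Smooth-sensitivity bound for the statistical parity query, single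
model: for `2 ≤ N0 ≤ N1` (group sizes of `A`), `β > 0`, any `Ā` at Hamming distance
`d ≤ N0 - 2` from `A`, and any neighbor `A''` of `Ā` (both with at least one individual
in each group), every classifier `h` with predictions in `[0,1]` satisfies
`e^{-βd}·|SP(Ā,h) - SP(A'',h)| ≤ max( 1/(N1+1) + 1/N0 , e^{-(N0-2)β}·(1/(n-1) + 1/2) )`. -/
theorem sp_smooth_sensitivity_bound {n : ℕ} (A Abar A'' : Fin n → Bool) (β : ℝ)
    (hβ : 0 < β) (hN0 : 2 ≤ nDis A) (hord : nDis A ≤ nAdv A)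
    (hd : (Finset.univ.filter (fun j => A j ≠ Abar j)).card ≤ nDis A - 2)
    (hdiff : (Finset.univ.filter (fun j => Abar j ≠ A'' j)).card = 1)
    (h1 : 1 ≤ nAdv Abar) (h0 : 1 ≤ nDis Abar)
    (h1' : 1 ≤ nAdv A'') (h0' : 1 ≤ nDis A'')
    (h : Fin n → ℝ) (hh : ∀ j, h j ∈ Set.Icc (0 : ℝ) 1) :
    Real.exp (-β * ((Finset.univ.filter (fun j => A j ≠ Abar j)).card : ℝ)) *
        |spGap Abar h - spGap A'' h| ≤
      max (1 / ((nAdv A : ℝ) + 1) + 1 / (nDis A : ℝ))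
        (Real.exp (-((nDis A : ℝ) - 2) * β) * (1 / ((n : ℝ) - 1) + 1 / 2)) := by
  classical
  set N0 := nDis A with hN0def
  set N1 := nAdv A with hN1def
  set d := (Finset.univ.filter (fun j => A j ≠ Abar j)).card with hddef
  have hN1ge : 2 ≤ N1 := le_trans hN0 hord
  have hsumA : N1 + N0 = n := adv_add_dis A
  have hsumBar : nAdv Abar + nDis Abar = n := adv_add_dis Abar
  have cDis : N0 ≤ nDis Abar + d := count_le A Abar false
  have cAdv : N1 ≤ nAdv Abar + d := count_le A Abar true
  have hdk : d + 2 ≤ N0 := by omega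
  obtain ⟨j0, hj0⟩ := Finset.card_eq_one.mp hdiff
  have hj0mem : j0 ∈ Finset.univ.filter (fun j => Abar j ≠ A'' j) := by
    rw [hj0]; exact mem_singleton_self _
  have hne : Abar j0 ≠ A'' j0 := (mem_filter.mp hj0mem).2
  have hagree : ∀ j, j ≠ j0 → Abar j = A'' j := by
    intro j hj
    by_contra hcon
    have hmem : j ∈ Finset.univ.filter (fun i => Abar i ≠ A'' i) :=
      mem_filter.mpr ⟨mem_univ _, hcon⟩
    rw [hj0, mem_singleton] at hmem
    exact hj hmem
  have hnR : (N1:ℝ) + (N0:ℝ) = (n:ℝ) := by exact_mod_cast hsumA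
  have hBarR : (nAdv Abar : ℝ) + (nDis Abar : ℝ) = (n:ℝ) := by exact_mod_cast hsumBar
  have hdR : (d:ℝ) + 2 ≤ (N0:ℝ) := by exact_mod_cast hdk
  have cDisR : (N0:ℝ) ≤ (nDis Abar : ℝ) + (d:ℝ) := by exact_mod_cast cDis
  have cAdvR : (N1:ℝ) ≤ (nAdv Abar : ℝ) + (d:ℝ) := by exact_mod_cast cAdv
  have hordR : (N0:ℝ) ≤ (N1:ℝ) := by exact_mod_cast hord
  have hlo : (0:ℝ) < (N0:ℝ) - (d:ℝ) := by linarith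
  have key : |spGap Abar h - spGap A'' h|
      ≤ 1/((N0:ℝ)-(d:ℝ)) + 1/(((N1:ℝ)+1)+(d:ℝ)) := by
    have e2 : ((n:ℝ)+1) - ((N0:ℝ)-(d:ℝ)) = ((N1:ℝ)+1)+(d:ℝ) := by linarith
    cases hB : Abar j0 with
    | true =>
      have hA2 : A'' j0 = false := by
        cases hA : A'' j0
        · rfl
        · exact absurd (hB.trans hA.symm) hne
      have bound := sp_local_bound Abar A'' j0 hB hA2 hagree h1' h0 h hh
      have e1 : (nDis Abar : ℝ) + 1 = ((n:ℝ)+1) - (nAdv Abar : ℝ) := by linarith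
      have hloA : (N0:ℝ) - (d:ℝ) ≤ (nAdv Abar : ℝ) := by linarith
      have hhiA : (nAdv Abar : ℝ) ≤ ((n:ℝ)+1) - ((N0:ℝ)-(d:ℝ)) := by linarith
      calc |spGap Abar h - spGap A'' h|
          ≤ 1/(nAdv Abar : ℝ) + 1/((nDis Abar : ℝ)+1) := bound
        _ = 1/(nAdv Abar : ℝ) + 1/(((n:ℝ)+1) - (nAdv Abar : ℝ)) := by rw [e1]
        _ ≤ 1/((N0:ℝ)-(d:ℝ)) + 1/(((n:ℝ)+1) - ((N0:ℝ)-(d:ℝ))) :=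
            phi_mono ((n:ℝ)+1) _ _ hlo hloA hhiA
        _ = 1/((N0:ℝ)-(d:ℝ)) + 1/(((N1:ℝ)+1)+(d:ℝ)) := by rw [e2]
    | false =>
      have hA2 : A'' j0 = true := by
        cases hA : A'' j0
        · exact absurd (hB.trans hA.symm) hne
        · rfl
      have hBn : (!(Abar j0)) = true := by rw [hB]; rfl
      have hAn : (!(A'' j0)) = false := by rw [hA2]; rfl
      have hagree' : ∀ j, j ≠ j0 → (!(Abar j)) = (!(A'' j)) := by
        intro j hj
        rw [hagree j hj]
      have hm2' : 1 ≤ nAdv (fun j => !(A'' j)) := by rw [nAdv_not]; exact h0'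
      have hM1 : 1 ≤ nDis (fun j => !(Abar j)) := by rw [nDis_not]; exact h1
      have bound := sp_local_bound (fun j => !(Abar j)) (fun j => !(A'' j)) j0
        hBn hAn hagree' hm2' hM1 h hh
      rw [spGap_not, spGap_not, nAdv_not, nDis_not] at bound
      have eneg : -spGap Abar h - -spGap A'' h = -(spGap Abar h - spGap A'' h) := by ring
      rw [eneg, abs_neg] at bound
      have e1 : (nAdv Abar : ℝ) + 1 = ((n:ℝ)+1) - (nDis Abar : ℝ) := by linarith
      have hloA : (N0:ℝ) - (d:ℝ) ≤ (nDis Abar : ℝ) := by linarith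
      have hhiA : (nDis Abar : ℝ) ≤ ((n:ℝ)+1) - ((N0:ℝ)-(d:ℝ)) := by linarith
      calc |spGap Abar h - spGap A'' h|
          ≤ 1/(nDis Abar : ℝ) + 1/((nAdv Abar : ℝ)+1) := bound
        _ = 1/(nDis Abar : ℝ) + 1/(((n:ℝ)+1) - (nDis Abar : ℝ)) := by rw [e1]
        _ ≤ 1/((N0:ℝ)-(d:ℝ)) + 1/(((n:ℝ)+1) - ((N0:ℝ)-(d:ℝ))) :=
            phi_mono ((n:ℝ)+1) _ _ hlo hloA hhiA
        _ = 1/((N0:ℝ)-(d:ℝ)) + 1/(((N1:ℝ)+1)+(d:ℝ)) := by rw [e2]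
  have hDcast : ((N0 - 2 : ℕ) : ℝ) = (N0:ℝ) - 2 := by
    rw [Nat.cast_sub hN0]
    norm_num
  have hseq := seq_max_bound β (N0:ℝ) ((N1:ℝ)+1) hβ
    (by have : (0:ℝ) ≤ (N1:ℝ) := Nat.cast_nonneg _; linarith) (N0-2) (by rw [hDcast]; linarith) d hd
  have hmono : Real.exp (-β*(d:ℝ)) * |spGap Abar h - spGap A'' h|
      ≤ Real.exp (-β*(d:ℝ)) * (1/((N0:ℝ)-(d:ℝ)) + 1/(((N1:ℝ)+1)+(d:ℝ))) :=
    mul_le_mul_of_nonneg_left key (Real.exp_nonneg _)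
  refine le_trans hmono (le_trans hseq (le_of_eq ?_))
  rw [hDcast]
  congr 1
  · ring
  · rw [show -β*((N0:ℝ)-2) = -((N0:ℝ)-2)*β from by ring,
      show (N0:ℝ)-((N0:ℝ)-2) = (2:ℝ) from by ring,
      show ((N1:ℝ)+1)+((N0:ℝ)-2) = (n:ℝ)-1 from by rw [← hnR]; ring]
    ring
end
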